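/- arXiv:2004.00790 — 2 statements merged into one kernel-verified Lean document; each statement's English description precedes it below -/
import Mathlib

section
/- Let $T>0$ and let $\mathcal{H}$ be the space of $\boldsymbol{v} = (v_1,v_2,v_3): [0,T]\to\mathbb{R}^3$ with $\boldsymbol{v},\dot{\boldsymbol{v}}\in L^2(0,T;\mathbb{R}^3)$ and $v_1(0)=v_1(T)=v_2(0)=v_2(T)=0$, with norm $\|\boldsymbol{v}\|_{\mathcal{H}}^2 = \int_0^T(|\dot{\boldsymbol{v}}|^2 + |\boldsymbol{v}|^2)dt$. Let $A, M$ be constant real $3\times 3$ matrices with $M$ strictly positive definite with smallest eigenvalue $\lambda^*>0$, and suppose $\sup_{|x|=|y|=1}|x^\intercal A y|^2 \le \tfrac{c^*}{4}$ with $c^* < 16\lambda^*$. Then the bilinear form $b(\boldsymbol{v},\boldsymbol{w}) = \int_0^T(\dot{\boldsymbol{v}}\cdot\dot{\boldsymbol{w}} + \boldsymbol{v}\cdot A\dot{\boldsymbol{w}} + \boldsymbol{v}\cdot M\boldsymbol{w})dt$ is coercive on $\mathcal{H}$: there exists $C>0$ with $b(\boldsymbol{v},\boldsymbol{v}) \ge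 C\|\boldsymbol{v}\|_{\mathcal{H}}^2$ for all $\boldsymbol{v}\in\mathcal{H}$. In fact, for any $\epsilon$ with $\tfrac{c^*}{16\lambda^*} < \epsilon < 1$, $b(\boldsymbol{v},\boldsymbol{v}) \ge (1-\epsilon)\int_0^T|\dot{\boldsymbol{v}}|^2 dt + (\lambda^* - \tfrac{c^*}{16\epsilon})\int_0^T|\boldsymbol{v}|^2 dt$. -/
/-! Pointwise in `t`, Young's inequality with weight `ε` bounds the cross term:
`|v ⬝ A v'| ≤ ε |v'|² + c*/(16ε) |v|²`, since `(v ⬝ A v')² ≤ c*/4 |v|² |v'|²`. Together with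
`v ⬝ M v ≥ λ* |v|²` this gives the `ε`-estimate after integration; for `c*/(16λ*) < ε < 1` both
coefficients are positive, and their minimum is a coercivity constant. -/

open Set

theorem abs_le_add_of_sq_le_four_mul {a b s : ℝ} (ha : 0 ≤ a) (hb : 0 ≤ b)
    (h : s ^ 2 ≤ 4 * a * b) : |s| ≤ a + b :=
  abs_le_of_sq_le_sq (by nlinarith [sq_nonneg (a - b)]) (add_nonneg ha hb)

section

variable {ι : Type*} [Fintype ι]

theorem young_lower_bound (A M : Matrix ι ι ℝ) {cs ls ε : ℝ} (hcs : 0 ≤ cs) (hε : 0 < ε)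
    {x y : ι → ℝ} (hM : ls * (∑ i, x i ^ 2) ≤ ∑ i, ∑ j, x i * M i j * x j)
    (hA : (∑ i, ∑ j, x i * A i j * y j) ^ 2 ≤ cs / 4 * (∑ i, x i ^ 2) * (∑ j, y j ^ 2)) :
    (1 - ε) * ∑ i, y i ^ 2 + (ls - cs / (16 * ε)) * ∑ i, x i ^ 2
      ≤ (∑ i, y i * y i) + (∑ i, ∑ j, x i * A i j * y j) + ∑ i, ∑ j, x i * M i j * x j := by
  have hyoung : |∑ i, ∑ j, x i * A i j * y j|
      ≤ ε * ∑ i, y i ^ 2 + cs / (16 * ε) * ∑ i, x i ^ 2 := by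
    refine abs_le_add_of_sq_le_four_mul (by positivity) (by positivity) (hA.trans_eq ?_)
    field_simp
    ring
  have hyy : ∑ i, y i * y i = ∑ i, y i ^ 2 := by simp only [sq]
  linarith [neg_abs_le (∑ i, ∑ j, x i * A i j * y j)]

open intervalIntegral

variable {a b : ℝ}

theorem intervalIntegrable_sum_sq {v : ℝ → ι → ℝ} (hab : a ≤ b)
    (hv : ContinuousOn v (Icc a b)) :
    IntervalIntegrable (fun t => ∑ i, v t i ^ 2) MeasureTheory.volume a b :=
  ContinuousOn.intervalIntegrable_of_Icc hab (by fun_prop)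

theorem integral_young_lower_bound (A M : Matrix ι ι ℝ) {cs ls ε : ℝ} (hcs : 0 ≤ cs)
    (hε : 0 < ε) (hM : ∀ x : ι → ℝ, ls * (∑ i, x i ^ 2) ≤ ∑ i, ∑ j, x i * M i j * x j)
    (hA : ∀ x y : ι → ℝ,
      (∑ i, ∑ j, x i * A i j * y j) ^ 2 ≤ cs / 4 * (∑ i, x i ^ 2) * (∑ j, y j ^ 2))
    {v v' : ℝ → ι → ℝ} (hab : a ≤ b) (hv : ContinuousOn v (Icc a b))
    (hv' : ContinuousOn v' (Icc a b)) :
    (1 - ε) * (∫ t in a..b, ∑ i, v' t i ^ 2)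
        + (ls - cs / (16 * ε)) * (∫ t in a..b, ∑ i, v t i ^ 2)
      ≤ ∫ t in a..b, ((∑ i, v' t i * v' t i) + (∑ i, ∑ j, v t i * A i j * v' t j)
          + (∑ i, ∑ j, v t i * M i j * v t j)) := by
  have hX := intervalIntegrable_sum_sq hab hv'
  have hY := intervalIntegrable_sum_sq hab hv
  rw [← integral_const_mul, ← integral_const_mul,
    ← integral_add (hX.const_mul _) (hY.const_mul _)]
  refine integral_mono_on hab ((hX.const_mul _).add (hY.const_mul _))
    (ContinuousOn.intervalIntegrable_of_Icc hab (by fun_prop)) fun t _ => ?_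
  exact young_lower_bound A M hcs hε (hM _) (hA _ _)

end

theorem min_mul_add_le_mul_add_mul {α β p q : ℝ} (hp : 0 ≤ p) (hq : 0 ≤ q) :
    min α β * (p + q) ≤ α * p + β * q := by
  nlinarith [mul_le_mul_of_nonneg_right (min_le_left α β) hp,
    mul_le_mul_of_nonneg_right (min_le_right α β) hq]

/-- Lemma 5.11 (abstract version): coercivity of the bilinear form associated
with the hierarchical-game boundary value problem under `c* < 16 λ*`. -/
theorem stmt17 (T cs ls : ℝ) (hT : 0 < T) (hls : 0 < ls) (hcs : 0 ≤ cs)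
    (A M : Matrix (Fin 3) (Fin 3) ℝ)
    (hM : ∀ x : Fin 3 → ℝ, ls * (∑ i, x i ^ 2) ≤ ∑ i, ∑ j, x i * M i j * x j)
    (hA : ∀ x y : Fin 3 → ℝ,
      (∑ i, ∑ j, x i * A i j * y j) ^ 2 ≤ cs / 4 * (∑ i, x i ^ 2) * (∑ j, y j ^ 2))
    (hwi : cs < 16 * ls) :
    (∃ C > 0, ∀ (v v' : ℝ → Fin 3 → ℝ),
      (∀ t ∈ Icc (0:ℝ) T, HasDerivAt v (v' t) t) →
      ContinuousOn v' (Icc (0:ℝ) T) →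
      v 0 0 = 0 → v T 0 = 0 → v 0 1 = 0 → v T 1 = 0 →
      C * (∫ t in (0:ℝ)..T, ((∑ i, v' t i ^ 2) + ∑ i, v t i ^ 2))
        ≤ ∫ t in (0:ℝ)..T,
            ((∑ i, v' t i * v' t i) + (∑ i, ∑ j, v t i * A i j * v' t j)
              + (∑ i, ∑ j, v t i * M i j * v t j))) ∧
    (∀ ε : ℝ, cs / (16 * ls) < ε → ε < 1 →
      ∀ (v v' : ℝ → Fin 3 → ℝ),
      (∀ t ∈ Icc (0:ℝ) T, HasDerivAt v (v' t) t) →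
      ContinuousOn v' (Icc (0:ℝ) T) →
      v 0 0 = 0 → v T 0 = 0 → v 0 1 = 0 → v T 1 = 0 →
      (1 - ε) * (∫ t in (0:ℝ)..T, ∑ i, v' t i ^ 2)
          + (ls - cs / (16 * ε)) * (∫ t in (0:ℝ)..T, ∑ i, v t i ^ 2)
        ≤ ∫ t in (0:ℝ)..T,
            ((∑ i, v' t i * v' t i) + (∑ i, ∑ j, v t i * A i j * v' t j)
              + (∑ i, ∑ j, v t i * M i j * v t j))) := by
  have hratio : 0 ≤ cs / (16 * ls) := by positivity
  refine ⟨?_, fun ε hε _ v v' hd hv' _ _ _ _ =>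
    integral_young_lower_bound A M hcs (hratio.trans_lt hε) hM hA hT.le
      (HasDerivAt.continuousOn hd) hv'⟩
  obtain ⟨ε₀, hε₀, hε₀_lt_one⟩ := exists_between ((div_lt_one (by positivity)).2 hwi)
  have hε₀_pos : 0 < ε₀ := hratio.trans_lt hε₀
  have hls_gap : 0 < ls - cs / (16 * ε₀) := by
    rw [div_lt_iff₀ (by positivity)] at hε₀
    rw [sub_pos, div_lt_iff₀ (by positivity)]
    linarith
  refine ⟨min (1 - ε₀) (ls - cs / (16 * ε₀)), lt_min (sub_pos.2 hε₀_lt_one) hls_gap,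
    fun v v' hd hv' _ _ _ _ => ?_⟩
  have hv := HasDerivAt.continuousOn hd
  rw [intervalIntegral.integral_add (intervalIntegrable_sum_sq hT.le hv')
    (intervalIntegrable_sum_sq hT.le hv)]
  refine (min_mul_add_le_mul_add_mul ?_ ?_).trans
    (integral_young_lower_bound A M hcs hε₀_pos hM hA hT.le hv hv') <;>
    exact intervalIntegral.integral_nonneg hT.le fun t _ => by positivity
end

section
/- Let $T>0$ and let $\boldsymbol{K}, \boldsymbol{\Sigma}: [0,T]\to\mathbb{R}^{N\times N}$ be continuous maps into symmetric positive definite matrices with $\boldsymbol{K}_t \ge 2\underline\kappa I$ and $\boldsymbol{\Sigma}_t - \tfrac1N\boldsymbol{\beta}_t \ge c_2 I$ for constants $\underline\kappa, c_2 > 0$, and $\boldsymbol{C}:[0,T]\to\mathbb{R}^{N\times N}$ continuous with the property that for all vectors $x,y\in\mathbb{R}^N$ and $t$, $|x^\intercal\boldsymbol{C}_t y| \le \tfrac{a^2}{2}\,y^\intercal\boldsymbol{K}_t^{-2}y + \tfrac{1}{2a^2}x^\intercal\boldsymbol{\Lambda}_t x$ where $x^\intercal(\boldsymbol{K}_t^{-1}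 - \tfrac{a^2}{2}\boldsymbol{K}_t^{-2})x \ge c_1|x|^2$ and $\boldsymbol{\Sigma}_t - \tfrac1N\boldsymbol\beta_t - \tfrac{1}{2a^2}\boldsymbol\Lambda_t \ge c_2 I$ for some $a, c_1, c_2 > 0$. Suppose $(\boldsymbol{q},\boldsymbol{x})$ and $(\boldsymbol{q}',\boldsymbol{x}')$ are two $C^1$ solutions of the two-point boundary value problem $\dot{\boldsymbol{q}} = \boldsymbol{K}_t^{-1}\boldsymbol{x}$, $-\dot{\boldsymbol{x}} = \boldsymbol{C}_t\boldsymbol{x} - (\boldsymbol{\Sigma}_t - \tfrac1N\boldsymbol\beta_t)\boldsymbol{q} + \boldsymbol{\mu}_t$, with $\boldsymbol{q}(0) = \boldsymbol{q}_0$, $\boldsymbol{q}(T) = 0$. Then $\boldsymbol{q} \equiv \boldsymbol{q}'$ and $\boldsymbol{x}\equiv\boldsymbol{x}'$. -/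
/-!
The difference `(p, y) = (q - q2, x - x2)` solves the homogeneous linear system
`p' = K⁻¹ y`, `y' = -C y + S p` with `p 0 = p T = 0`. Absorbing the cross term `p ⬝ C y` by the
assumed Young-type bound, the derivative of `p ⬝ y` dominates `c₁ |y|² + c₂ |p|² ≥ 0`. Hence
`p ⬝ y` is monotone on `[0, T]` and vanishes at both ends, so it is constant there; its
derivative then vanishes on all of `[0, T]`, and with it `y` and `p`.
-/

open Set Matrix

theorem HasDerivAt.dotProduct {ι : Type*} [Fintype ι] {u v : ℝ → ι → ℝ} {u' v' : ι → ℝ}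
    {t : ℝ} (hu : HasDerivAt u u' t) (hv : HasDerivAt v v' t) :
    HasDerivAt (fun s => u s ⬝ᵥ v s) (u' ⬝ᵥ v t + u t ⬝ᵥ v') t := by
  have h := HasDerivAt.fun_sum fun i (_ : i ∈ Finset.univ) =>
    (hasDerivAt_pi.mp hu i).mul (hasDerivAt_pi.mp hv i)
  unfold _root_.dotProduct
  simpa only [Pi.mul_apply, Finset.sum_add_distrib] using h

theorem eqOn_zero_of_hasDerivAt_nonneg_of_eq {f f' : ℝ → ℝ} {a b : ℝ} (hab : a < b)
    (hf : ∀ t ∈ Icc a b, HasDerivAt f (f' t) t) (hf' : ∀ t ∈ Icc a b, 0 ≤ f' t)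
    (hfab : f a = f b) : EqOn f' 0 (Icc a b) := by
  have hmono : MonotoneOn f (Icc a b) :=
    monotoneOn_of_hasDerivWithinAt_nonneg (convex_Icc a b)
      (fun t ht => (hf t ht).continuousAt.continuousWithinAt)
      (fun t ht => (hf t (interior_subset ht)).hasDerivWithinAt)
      (fun t ht => hf' t (interior_subset ht))
  have hconst : EqOn f (fun _ => f a) (Icc a b) := fun t ht =>
    le_antisymm (hfab ▸ hmono ht (right_mem_Icc.2 hab.le) ht.2)
      (hmono (left_mem_Icc.2 hab.le) ht ht.1)
  intro t ht
  exact (uniqueDiffOn_Icc hab t ht).eq_deriv _ (hf t ht).hasDerivWithinAt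
    ((hasDerivWithinAt_const t _ (f a)).congr hconst (hconst ht))

theorem eq_zero_of_mul_sum_sq_add_mul_sum_sq_nonpos {ι : Type*} [Fintype ι] {c₁ c₂ : ℝ}
    (hc₁ : 0 < c₁) (hc₂ : 0 < c₂) {v w : ι → ℝ}
    (h : c₁ * ∑ i, v i ^ 2 + c₂ * ∑ i, w i ^ 2 ≤ 0) : v = 0 ∧ w = 0 := by
  have hv : 0 ≤ ∑ i, v i ^ 2 := by positivity
  have hw : 0 ≤ ∑ i, w i ^ 2 := by positivity
  have hv0 : ∑ i, v i ^ 2 = 0 := by nlinarith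
  have hw0 : ∑ i, w i ^ 2 = 0 := by nlinarith
  simp only [sq] at hv0 hw0
  exact ⟨dotProduct_self_eq_zero.mp hv0, dotProduct_self_eq_zero.mp hw0⟩

theorem weighted_sum_sq_le_of_cross_term_le {ι : Type*} [Fintype ι]
    {A B C Λ S : Matrix ι ι ℝ} {α β c₁ c₂ : ℝ} {v w : ι → ℝ}
    (hC : |v ⬝ᵥ C *ᵥ w| ≤ α * (w ⬝ᵥ B *ᵥ w) + β * (v ⬝ᵥ Λ *ᵥ v))
    (hA : c₁ * ∑ i, w i ^ 2 ≤ w ⬝ᵥ (A - α • B) *ᵥ w)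
    (hS : c₂ * ∑ i, v i ^ 2 ≤ v ⬝ᵥ (S - β • Λ) *ᵥ v) :
    c₁ * ∑ i, w i ^ 2 + c₂ * ∑ i, v i ^ 2 ≤
      w ⬝ᵥ A *ᵥ w - v ⬝ᵥ C *ᵥ w + v ⬝ᵥ S *ᵥ v := by
  simp only [sub_mulVec, smul_mulVec, dotProduct_sub, dotProduct_smul, smul_eq_mul] at hA hS
  linarith [le_abs_self (v ⬝ᵥ C *ᵥ w)]

theorem eqOn_zero_of_linear_bvp {ι : Type*} [Fintype ι] {A C S : ℝ → Matrix ι ι ℝ}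
    {p y : ℝ → ι → ℝ} {a b c₁ c₂ : ℝ} (hab : a < b) (hc₁ : 0 < c₁) (hc₂ : 0 < c₂)
    (hcoer : ∀ t ∈ Icc a b, ∀ v w : ι → ℝ, c₁ * ∑ i, w i ^ 2 + c₂ * ∑ i, v i ^ 2 ≤
      w ⬝ᵥ A t *ᵥ w - v ⬝ᵥ C t *ᵥ w + v ⬝ᵥ S t *ᵥ v)
    (hp : ∀ t ∈ Icc a b, HasDerivAt p (A t *ᵥ y t) t)
    (hy : ∀ t ∈ Icc a b, HasDerivAt y (-(C t *ᵥ y t) + S t *ᵥ p t) t)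
    (hpa : p a = 0) (hpb : p b = 0) : EqOn p 0 (Icc a b) ∧ EqOn y 0 (Icc a b) := by
  set rate : ℝ → ℝ := fun t =>
    y t ⬝ᵥ A t *ᵥ y t - p t ⬝ᵥ C t *ᵥ y t + p t ⬝ᵥ S t *ᵥ p t
  have hderiv : ∀ t ∈ Icc a b, HasDerivAt (fun s => p s ⬝ᵥ y s) (rate t) t := fun t ht =>
    ((hp t ht).dotProduct (hy t ht)).congr_deriv <| by
      rw [dotProduct_comm, dotProduct_add, dotProduct_neg]; ring
  have hsq_nonneg : ∀ t, 0 ≤ c₁ * ∑ i, y t i ^ 2 + c₂ * ∑ i, p t i ^ 2 := fun t => by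
    positivity
  have hrate : EqOn rate 0 (Icc a b) :=
    eqOn_zero_of_hasDerivAt_nonneg_of_eq hab hderiv
      (fun t ht => (hsq_nonneg t).trans (hcoer t ht _ _)) (by simp [hpa, hpb])
  have hzero : ∀ t ∈ Icc a b, y t = 0 ∧ p t = 0 := fun t ht =>
    eq_zero_of_mul_sum_sq_add_mul_sum_sq_nonpos hc₁ hc₂
      ((hcoer t ht _ _).trans (hrate ht).le)
  exact ⟨fun t ht => (hzero t ht).2, fun t ht => (hzero t ht).1⟩

theorem stmt19_general (T : ℝ) (hT : 0 < T) (N : ℕ)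
    (K Sg C Λm β : ℝ → Matrix (Fin N) (Fin N) ℝ)
    (μ : ℝ → Fin N → ℝ)
    (a c1 c2 : ℝ) (hc1 : 0 < c1) (hc2 : 0 < c2)
    (hCbd : ∀ t ∈ Icc (0:ℝ) T, ∀ v w : Fin N → ℝ,
      |v ⬝ᵥ (C t).mulVec w| ≤
        a ^ 2 / 2 * (w ⬝ᵥ ((K t)⁻¹ * (K t)⁻¹).mulVec w)
          + 1 / (2 * a ^ 2) * (v ⬝ᵥ (Λm t).mulVec v))
    (hc1b : ∀ t ∈ Icc (0:ℝ) T, ∀ v : Fin N → ℝ,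
      c1 * (∑ i, v i ^ 2) ≤
        v ⬝ᵥ (((K t)⁻¹ - (a ^ 2 / 2) • ((K t)⁻¹ * (K t)⁻¹)).mulVec v))
    (hc2b : ∀ t ∈ Icc (0:ℝ) T, ∀ v : Fin N → ℝ,
      c2 * (∑ i, v i ^ 2) ≤
        v ⬝ᵥ ((Sg t - ((1:ℝ)/(N:ℝ)) • β t - (1 / (2 * a ^ 2)) • Λm t).mulVec v))
    (q x q2 x2 : ℝ → Fin N → ℝ) (q0 : Fin N → ℝ)
    (hq : ∀ t ∈ Icc (0:ℝ) T, HasDerivAt q (((K t)⁻¹).mulVec (x t)) t)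
    (hx : ∀ t ∈ Icc (0:ℝ) T, HasDerivAt x
      (-((C t).mulVec (x t)) + (Sg t - ((1:ℝ)/(N:ℝ)) • β t).mulVec (q t) - μ t) t)
    (hq2 : ∀ t ∈ Icc (0:ℝ) T, HasDerivAt q2 (((K t)⁻¹).mulVec (x2 t)) t)
    (hx2 : ∀ t ∈ Icc (0:ℝ) T, HasDerivAt x2
      (-((C t).mulVec (x2 t)) + (Sg t - ((1:ℝ)/(N:ℝ)) • β t).mulVec (q2 t) - μ t) t)
    (hq0 : q 0 = q0) (hqT : q T = 0) (hq20 : q2 0 = q0) (hq2T : q2 T = 0) :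
    EqOn q q2 (Icc (0:ℝ) T) ∧ EqOn x x2 (Icc (0:ℝ) T) := by
  obtain ⟨hq_eq, hx_eq⟩ := eqOn_zero_of_linear_bvp (A := fun t => (K t)⁻¹) (C := C)
      (S := fun t => Sg t - ((1:ℝ)/(N:ℝ)) • β t) (p := q - q2) (y := x - x2) hT hc1 hc2
    (fun t ht v w => weighted_sum_sq_le_of_cross_term_le
      (hCbd t ht v w) (hc1b t ht w) (hc2b t ht v))
    (fun t ht => ((hq t ht).sub (hq2 t ht)).congr_deriv (mulVec_sub _ _ _).symm)
    (fun t ht => ((hx t ht).sub (hx2 t ht)).congr_deriv <| by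
      simp only [Pi.sub_apply, mulVec_sub]; abel)
    (by rw [Pi.sub_apply, hq0, hq20, sub_self]) (by rw [Pi.sub_apply, hqT, hq2T, sub_self])
  exact ⟨fun t ht => sub_eq_zero.mp (hq_eq ht), fun t ht => sub_eq_zero.mp (hx_eq ht)⟩

/-- Deterministic uniqueness lemma for the constrained Nash equilibrium
two-point boundary value problem. -/
theorem stmt19 (T : ℝ) (hT : 0 < T) (N : ℕ) (hN : 1 ≤ N)
    (K Sg C Λm β : ℝ → Matrix (Fin N) (Fin N) ℝ)
    (μ : ℝ → Fin N → ℝ)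
    (hKc : ∀ i j, Continuous fun t => K t i j)
    (hSgc : ∀ i j, Continuous fun t => Sg t i j)
    (hCc : ∀ i j, Continuous fun t => C t i j)
    (hβc : ∀ i j, Continuous fun t => β t i j)
    (hμc : ∀ i, Continuous fun t => μ t i)
    (uk a c1 c2 : ℝ) (huk : 0 < uk) (ha : 0 < a) (hc1 : 0 < c1) (hc2 : 0 < c2)
    (hKpd : ∀ t ∈ Icc (0:ℝ) T, (K t).PosDef)
    (hSgpd : ∀ t ∈ Icc (0:ℝ) T, (Sg t).PosDef)
    (hKlb : ∀ t ∈ Icc (0:ℝ) T, ∀ v : Fin N → ℝ,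
      2 * uk * (∑ i, v i ^ 2) ≤ v ⬝ᵥ (K t).mulVec v)
    (hSglb : ∀ t ∈ Icc (0:ℝ) T, ∀ v : Fin N → ℝ,
      c2 * (∑ i, v i ^ 2) ≤ v ⬝ᵥ ((Sg t - ((1:ℝ)/(N:ℝ)) • β t).mulVec v))
    (hCbd : ∀ t ∈ Icc (0:ℝ) T, ∀ v w : Fin N → ℝ,
      |v ⬝ᵥ (C t).mulVec w| ≤
        a ^ 2 / 2 * (w ⬝ᵥ ((K t)⁻¹ * (K t)⁻¹).mulVec w)
          + 1 / (2 * a ^ 2) * (v ⬝ᵥ (Λm t).mulVec v))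
    (hc1b : ∀ t ∈ Icc (0:ℝ) T, ∀ v : Fin N → ℝ,
      c1 * (∑ i, v i ^ 2) ≤
        v ⬝ᵥ (((K t)⁻¹ - (a ^ 2 / 2) • ((K t)⁻¹ * (K t)⁻¹)).mulVec v))
    (hc2b : ∀ t ∈ Icc (0:ℝ) T, ∀ v : Fin N → ℝ,
      c2 * (∑ i, v i ^ 2) ≤
        v ⬝ᵥ ((Sg t - ((1:ℝ)/(N:ℝ)) • β t - (1 / (2 * a ^ 2)) • Λm t).mulVec v))
    (q x q2 x2 : ℝ → Fin N → ℝ) (q0 : Fin N → ℝ)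
    (hq : ∀ t ∈ Icc (0:ℝ) T, HasDerivAt q (((K t)⁻¹).mulVec (x t)) t)
    (hx : ∀ t ∈ Icc (0:ℝ) T, HasDerivAt x
      (-((C t).mulVec (x t)) + (Sg t - ((1:ℝ)/(N:ℝ)) • β t).mulVec (q t) - μ t) t)
    (hq2 : ∀ t ∈ Icc (0:ℝ) T, HasDerivAt q2 (((K t)⁻¹).mulVec (x2 t)) t)
    (hx2 : ∀ t ∈ Icc (0:ℝ) T, HasDerivAt x2
      (-((C t).mulVec (x2 t)) + (Sg t - ((1:ℝ)/(N:ℝ)) • β t).mulVec (q2 t) - μ t) t)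
    (hq0 : q 0 = q0) (hqT : q T = 0) (hq20 : q2 0 = q0) (hq2T : q2 T = 0) :
    EqOn q q2 (Icc (0:ℝ) T) ∧ EqOn x x2 (Icc (0:ℝ) T) :=
  stmt19_general T hT N K Sg C Λm β μ a c1 c2 hc1 hc2 hCbd hc1b hc2b q x q2 x2 q0 hq hx hq2 hx2 hq0
    hqT hq20 hq2T
end
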